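/- There exists a unique pair of entire functions u, v : ℂ → ℂ such that u is odd, v is even, v(0) = 1, and for all t ∈ ℂ: u(qt) = q^α u(t) − t q^α v(t) and v(qt) = t q² u(t) + (1 − t² q²) v(t). (This is the entire power-series solution S_B = [u, v]^T of the q-difference system S_B(qt) = [[q^α, −t q^α],[t q², 1 − t² q²]] S_B(t).) -/

import Mathlib

/-!
Writing `u = ∑ aₙ tⁿ` and `v = ∑ bₙ tⁿ`, the system is equivalent to the recurrences
`(qⁿ - q^α) aₙ = -q^α bₙ₋₁` and `(qⁿ - 1) bₙ = q² (aₙ₋₁ - bₙ₋₂)`. Since `qⁿ ≠ 1` for `n ≥ 1`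
and `q^α ≠ qⁿ` for odd `n`, these recurrences, the parities and `b₀ = 1` determine the
coefficients. The solution has `b_{n+2} / bₙ = O(qⁿ)` and `a_{n+1} = O(bₙ)`, so both series
are entire; uniqueness among entire functions is uniqueness of Taylor coefficients.
-/

open Filter Topology FormalMultilinearSeries
open scoped NNReal

lemma pow_ne_one_of_norm_lt_one {𝕜 : Type*} [NormedDivisionRing 𝕜] {x : 𝕜} (hx : ‖x‖ < 1)
    {n : ℕ} (hn : n ≠ 0) : x ^ n ≠ 1 := fun h =>
  (pow_lt_one₀ (norm_nonneg x) hx hn).ne (by rw [← norm_pow, h, norm_one])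

section Growth

variable {E : Type*} [SeminormedAddCommGroup E] {c : ℕ → E} {ε : ℕ → ℝ}

lemma summable_norm_mul_pow_of_norm_succ_le (hε : Tendsto ε atTop (𝓝 0))
    (hc : ∀ n, ‖c (n + 1)‖ ≤ ε n * ‖c n‖) (r : ℝ) : Summable fun n => ‖c n‖ * r ^ n := by
  refine summable_of_ratio_norm_eventually_le (r := 1 / 2) (by norm_num) ?_
  have hsmall : ∀ᶠ n in atTop, ε n * |r| ≤ 1 / 2 :=
    (by simpa using hε.mul_const |r| : Tendsto (fun n => ε n * |r|) atTop (𝓝 0)).eventually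
      (eventually_le_nhds (by norm_num))
  filter_upwards [hsmall] with n hn
  simp only [norm_mul, norm_pow, Real.norm_eq_abs, abs_norm, pow_succ]
  calc ‖c (n + 1)‖ * (|r| ^ n * |r|) ≤ ε n * ‖c n‖ * (|r| ^ n * |r|) := by gcongr; exact hc n
    _ = (ε n * |r|) * (‖c n‖ * |r| ^ n) := by ring
    _ ≤ 1 / 2 * (‖c n‖ * |r| ^ n) := by gcongr

lemma summable_norm_mul_pow_of_norm_add_two_le (hε : Tendsto ε atTop (𝓝 0))
    (hc : ∀ n, ‖c (n + 2)‖ ≤ ε n * ‖c n‖) (r : ℝ) : Summable fun n => ‖c n‖ * r ^ n := by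
  have h2 : Tendsto (fun k : ℕ => 2 * k) atTop atTop := tendsto_id.const_mul_atTop' two_pos
  refine Summable.even_add_odd ?_ ?_
  · simpa only [pow_mul] using summable_norm_mul_pow_of_norm_succ_le (c := fun k => c (2 * k))
      (hε.comp h2) (fun k => hc (2 * k)) (r ^ 2)
  · have := summable_norm_mul_pow_of_norm_succ_le (c := fun k => c (2 * k + 1))
      (hε.comp ((tendsto_add_atTop_nat 1).comp h2)) (fun k => hc (2 * k + 1)) (r ^ 2)
    simpa only [pow_succ, pow_mul, mul_assoc] using this.mul_right r

end Growth

namespace QDifferenceSystem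

section PowerSeries

variable {f g : ℂ → ℂ} {c d : ℕ → ℂ}

def HasEntireSeries (f : ℂ → ℂ) (c : ℕ → ℂ) : Prop :=
  ∀ t, HasSum (fun n => c n * t ^ n) (f t)

def shiftCoeff (c : ℕ → ℂ) : ℕ → ℂ
  | 0 => 0
  | n + 1 => c n

lemma shiftCoeff_congr {n : ℕ} (h : ∀ k < n, c k = d k) : shiftCoeff c n = shiftCoeff d n := by
  cases n with
  | zero => rfl
  | succ n => exact h n n.lt_succ_self

lemma Differentiable.exists_hasEntireSeries (hf : Differentiable ℂ f) :
    ∃ c, HasEntireSeries f c := by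
  refine ⟨(cauchyPowerSeries f 0 1).coeff, fun t => ?_⟩
  simpa [apply_eq_pow_smul_coeff, mul_comm] using
    (hf.hasFPowerSeriesOnBall 0 one_pos).hasSum (y := t) (by simp)

lemma exists_differentiable_hasEntireSeries
    (hc : ∀ r : ℝ≥0, Summable fun n => ‖c n‖ * (r : ℝ) ^ n) :
    ∃ f, Differentiable ℂ f ∧ HasEntireSeries f c := by
  have hrad : (ofScalars ℂ c).radius = ⊤ :=
    radius_eq_top_of_summable_norm _ fun r => by simpa [ofScalars_norm] using hc r
  have hf := (ofScalars ℂ c).hasFPowerSeriesOnBall (by simp [hrad])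
  rw [hrad] at hf
  refine ⟨(ofScalars ℂ c).sum, fun t => (hf.analyticAt_of_mem (by simp)).differentiableAt,
    fun t => ?_⟩
  simpa [ofScalars_apply_eq, mul_comm] using hf.hasSum (y := t) (by simp)

lemma HasEntireSeries.coeff_eq (hf : HasEntireSeries f c) (hg : HasEntireSeries f d) : c = d := by
  have hc : HasFPowerSeriesAt f (ofScalars ℂ c) 0 := by
    rw [hasFPowerSeriesAt_iff]
    exact Eventually.of_forall fun t => by simpa [mul_comm] using hf t
  have hd : HasFPowerSeriesAt f (ofScalars ℂ d) 0 := by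
    rw [hasFPowerSeriesAt_iff]
    exact Eventually.of_forall fun t => by simpa [mul_comm] using hg t
  exact (ofScalars_series_eq_iff ℂ c d).mp (hc.eq_formalMultilinearSeries hd)

lemma HasEntireSeries.forall_eq_iff (hf : HasEntireSeries f c) (hg : HasEntireSeries g d) :
    (∀ t, f t = g t) ↔ ∀ n, c n = d n := by
  refine ⟨fun h => congrFun (hf.coeff_eq fun t => ?_), fun h t => (hf t).unique ?_⟩
  · rw [h t]
    exact hg t
  · simpa only [h] using hg t

lemma HasEntireSeries.apply_zero (hf : HasEntireSeries f c) : f 0 = c 0 :=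
  (hf 0).unique <| by
    simpa using hasSum_single (f := fun n => c n * (0 : ℂ) ^ n) 0 fun n hn => by simp [hn]

lemma HasEntireSeries.comp_mul (hf : HasEntireSeries f c) (s : ℂ) :
    HasEntireSeries (fun t => f (s * t)) (fun n => s ^ n * c n) := fun t => by
  simpa only [mul_pow, mul_left_comm, mul_assoc] using hf (s * t)

lemma HasEntireSeries.comp_neg (hf : HasEntireSeries f c) :
    HasEntireSeries (fun t => f (-t)) (fun n => (-1) ^ n * c n) := by
  simpa using hf.comp_mul (-1)

lemma HasEntireSeries.const_mul (hf : HasEntireSeries f c) (s : ℂ) :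
    HasEntireSeries (fun t => s * f t) (fun n => s * c n) := fun t => by
  simpa only [mul_assoc] using (hf t).mul_left s

lemma HasEntireSeries.neg (hf : HasEntireSeries f c) :
    HasEntireSeries (fun t => -f t) (fun n => -c n) := fun t => by
  simpa only [neg_mul] using (hf t).neg

lemma HasEntireSeries.add (hf : HasEntireSeries f c) (hg : HasEntireSeries g d) :
    HasEntireSeries (fun t => f t + g t) (fun n => c n + d n) := fun t => by
  simpa only [add_mul] using (hf t).add (hg t)

lemma HasEntireSeries.sub (hf : HasEntireSeries f c) (hg : HasEntireSeries g d) :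
    HasEntireSeries (fun t => f t - g t) (fun n => c n - d n) := fun t => by
  simpa only [sub_mul] using (hf t).sub (hg t)

lemma HasEntireSeries.id_mul (hf : HasEntireSeries f c) :
    HasEntireSeries (fun t => t * f t) (shiftCoeff c) := fun t => by
  refine (hasSum_nat_add_iff' 1).mp ?_
  simpa [shiftCoeff, pow_succ, mul_comm, mul_left_comm, mul_assoc] using (hf t).mul_left t

end PowerSeries

section Coefficients

variable {q Q : ℂ}

def IsSolution (q Q : ℂ) (u v : ℂ → ℂ) : Prop :=
  (∀ t, u (-t) = -u t) ∧ (∀ t, v (-t) = v t) ∧ v 0 = 1 ∧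
    ∀ t, u (q * t) = Q * u t - t * Q * v t ∧ v (q * t) = t * q ^ 2 * u t + (1 - t ^ 2 * q ^ 2) * v t

structure IsSeriesSolution (q Q : ℂ) (a b : ℕ → ℂ) : Prop where
  even_eq_zero : ∀ n, Even n → a n = 0
  odd_eq_zero : ∀ n, Odd n → b n = 0
  zero_eq_one : b 0 = 1
  rec_fst : ∀ n, q ^ n * a n = Q * a n - Q * shiftCoeff b n
  rec_snd : ∀ n, q ^ n * b n = q ^ 2 * shiftCoeff a n + b n - q ^ 2 * shiftCoeff (shiftCoeff b) n

lemma forall_neg_one_pow_mul_eq_neg_iff {a : ℕ → ℂ} :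
    (∀ n, (-1) ^ n * a n = -a n) ↔ ∀ n, Even n → a n = 0 := by
  refine forall_congr' fun n => ?_
  rcases n.even_or_odd with hn | hn <;> simp [hn.neg_one_pow, hn, self_eq_neg]

lemma forall_neg_one_pow_mul_eq_self_iff {b : ℕ → ℂ} :
    (∀ n, (-1) ^ n * b n = b n) ↔ ∀ n, Odd n → b n = 0 := by
  refine forall_congr' fun n => ?_
  rcases n.even_or_odd with hn | hn <;> simp [hn.neg_one_pow, hn, neg_eq_self]

theorem isSolution_iff {u v : ℂ → ℂ} {a b : ℕ → ℂ} (hu : HasEntireSeries u a)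
    (hv : HasEntireSeries v b) : IsSolution q Q u v ↔ IsSeriesSolution q Q a b := by
  have hodd : (∀ t, u (-t) = -u t) ↔ ∀ n, Even n → a n = 0 :=
    (hu.comp_neg.forall_eq_iff hu.neg).trans forall_neg_one_pow_mul_eq_neg_iff
  have heven : (∀ t, v (-t) = v t) ↔ ∀ n, Odd n → b n = 0 :=
    (hv.comp_neg.forall_eq_iff hv).trans forall_neg_one_pow_mul_eq_self_iff
  have hfst : (∀ t, u (q * t) = Q * u t - t * Q * v t) ↔
      ∀ n, q ^ n * a n = Q * a n - Q * shiftCoeff b n := by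
    refine (hu.comp_mul q).forall_eq_iff ?_
    convert (hu.const_mul Q).sub (hv.id_mul.const_mul Q) using 2 with t
    ring
  have hsnd : (∀ t, v (q * t) = t * q ^ 2 * u t + (1 - t ^ 2 * q ^ 2) * v t) ↔
      ∀ n, q ^ n * b n = q ^ 2 * shiftCoeff a n + b n - q ^ 2 * shiftCoeff (shiftCoeff b) n := by
    refine (hv.comp_mul q).forall_eq_iff ?_
    convert ((hu.id_mul.const_mul (q ^ 2)).add hv).sub (hv.id_mul.id_mul.const_mul (q ^ 2))
      using 2 with t
    ring
  rw [IsSolution, forall_and, hodd, heven, hv.apply_zero, hfst, hsnd]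
  exact ⟨fun ⟨h₁, h₂, h₃, h₄, h₅⟩ => ⟨h₁, h₂, h₃, h₄, h₅⟩,
    fun ⟨h₁, h₂, h₃, h₄, h₅⟩ => ⟨h₁, h₂, h₃, h₄, h₅⟩⟩

theorem IsSeriesSolution.unique (hq : ∀ n, n ≠ 0 → q ^ n ≠ 1) (hQq : ∀ n, Odd n → Q ≠ q ^ n)
    {a b a' b' : ℕ → ℂ} (h : IsSeriesSolution q Q a b) (h' : IsSeriesSolution q Q a' b') :
    a = a' ∧ b = b' := by
  suffices key : ∀ n, a n = a' n ∧ b n = b' n from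
    ⟨funext fun n => (key n).1, funext fun n => (key n).2⟩
  intro n
  induction n using Nat.strong_induction_on with
  | _ n ih =>
    have hb : shiftCoeff b n = shiftCoeff b' n := shiftCoeff_congr fun k hk => (ih k hk).2
    have hbb : shiftCoeff (shiftCoeff b) n = shiftCoeff (shiftCoeff b') n :=
      shiftCoeff_congr fun k hk => shiftCoeff_congr fun j hj => (ih j (hj.trans hk)).2
    have ha : shiftCoeff a n = shiftCoeff a' n := shiftCoeff_congr fun k hk => (ih k hk).1
    constructor
    · rcases n.even_or_odd with hn | hn
      · rw [h.even_eq_zero n hn, h'.even_eq_zero n hn]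
      · refine mul_left_cancel₀ (sub_ne_zero.2 (hQq n hn).symm) ?_
        linear_combination h.rec_fst n - h'.rec_fst n - Q * hb
    · rcases eq_or_ne n 0 with rfl | hn
      · rw [h.zero_eq_one, h'.zero_eq_one]
      · refine mul_left_cancel₀ (sub_ne_zero.2 (hq n hn)) ?_
        linear_combination h.rec_snd n - h'.rec_snd n + q ^ 2 * ha - q ^ 2 * hbb

/- The recurrences of `IsSeriesSolution` solved for `a (n + 1)` and `b (n + 2)`. The denominator
`Q - q ^ (n + 1)` may vanish only for odd `n`, where `vCoeff q Q n = 0` anyway. -/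
noncomputable def vCoeff (q Q : ℂ) : ℕ → ℂ
  | 0 => 1
  | 1 => 0
  | n + 2 => q ^ (n + 3) / ((q ^ (n + 2) - 1) * (Q - q ^ (n + 1))) * vCoeff q Q n

noncomputable def uCoeff (q Q : ℂ) : ℕ → ℂ
  | 0 => 0
  | n + 1 => Q / (Q - q ^ (n + 1)) * vCoeff q Q n

lemma vCoeff_of_odd {n : ℕ} (hn : Odd n) : vCoeff q Q n = 0 := by
  obtain ⟨k, rfl⟩ := hn
  induction k with
  | zero => rfl
  | succ k ih => rw [show 2 * (k + 1) + 1 = 2 * k + 1 + 2 by ring, vCoeff, ih, mul_zero]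

lemma uCoeff_of_even {n : ℕ} (hn : Even n) : uCoeff q Q n = 0 := by
  rcases n with _ | n
  · rfl
  · rw [uCoeff, vCoeff_of_odd (Nat.even_add_one.1 hn |> Nat.not_even_iff_odd.1), mul_zero]

lemma uCoeff_rec (hQq : ∀ n, Odd n → Q ≠ q ^ n) (n : ℕ) :
    q ^ n * uCoeff q Q n = Q * uCoeff q Q n - Q * shiftCoeff (vCoeff q Q) n := by
  rcases n with _ | n
  · simp [uCoeff, shiftCoeff]
  rcases n.even_or_odd with hn | hn
  · have := sub_ne_zero.2 (hQq (n + 1) hn.add_one)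
    simp only [uCoeff, shiftCoeff]
    field_simp
    ring
  · simp [uCoeff, shiftCoeff, vCoeff_of_odd hn]

lemma vCoeff_rec (hq : ∀ n, n ≠ 0 → q ^ n ≠ 1) (hQq : ∀ n, Odd n → Q ≠ q ^ n) (n : ℕ) :
    q ^ n * vCoeff q Q n = q ^ 2 * shiftCoeff (uCoeff q Q) n + vCoeff q Q n
      - q ^ 2 * shiftCoeff (shiftCoeff (vCoeff q Q)) n := by
  match n with
  | 0 => simp [vCoeff, shiftCoeff]
  | 1 => simp [vCoeff, uCoeff, shiftCoeff]
  | n + 2 =>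
    rcases n.even_or_odd with hn | hn
    · have := sub_ne_zero.2 (hq (n + 2) (by omega))
      have := sub_ne_zero.2 (hQq (n + 1) hn.add_one)
      simp only [vCoeff, uCoeff, shiftCoeff]
      field_simp
      ring
    · simp [vCoeff, uCoeff, shiftCoeff, vCoeff_of_odd hn]

lemma isSeriesSolution_coeff (hq : ∀ n, n ≠ 0 → q ^ n ≠ 1) (hQq : ∀ n, Odd n → Q ≠ q ^ n) :
    IsSeriesSolution q Q (uCoeff q Q) (vCoeff q Q) where
  even_eq_zero _ := uCoeff_of_even
  odd_eq_zero _ := vCoeff_of_odd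
  zero_eq_one := rfl
  rec_fst := uCoeff_rec hQq
  rec_snd := vCoeff_rec hq hQq

end Coefficients

section Convergence

variable {q Q : ℂ}

lemma tendsto_vCoeff_ratio (hq : ‖q‖ < 1) (hQ : Q ≠ 0) :
    Tendsto (fun n : ℕ => q ^ (n + 3) / ((q ^ (n + 2) - 1) * (Q - q ^ (n + 1)))) atTop (𝓝 0) := by
  have hpow (k : ℕ) : Tendsto (fun n : ℕ => q ^ (n + k)) atTop (𝓝 0) :=
    (tendsto_pow_atTop_nhds_zero_of_norm_lt_one hq).comp (tendsto_add_atTop_nat k)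
  have h := (hpow 3).div (((hpow 2).sub_const 1).mul ((tendsto_const_nhds (x := Q)).sub (hpow 1)))
    (by simpa using hQ)
  rwa [zero_div] at h

lemma summable_vCoeff (hq : ‖q‖ < 1) (hQ : Q ≠ 0) (r : ℝ) :
    Summable fun n => ‖vCoeff q Q n‖ * r ^ n := by
  have h := (tendsto_vCoeff_ratio hq hQ).norm
  rw [norm_zero] at h
  exact summable_norm_mul_pow_of_norm_add_two_le h (fun n => by rw [vCoeff, norm_mul]) r

lemma summable_uCoeff (hq : ‖q‖ < 1) (hQ : Q ≠ 0) (r : ℝ) :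
    Summable fun n => ‖uCoeff q Q n‖ * r ^ n := by
  have hw : Tendsto (fun n : ℕ => Q / (Q - q ^ (n + 1))) atTop (𝓝 1) := by
    have hpow : Tendsto (fun n : ℕ => q ^ (n + 1)) atTop (𝓝 0) :=
      (tendsto_pow_atTop_nhds_zero_of_norm_lt_one hq).comp (tendsto_add_atTop_nat 1)
    have h := (tendsto_const_nhds (x := Q)).div ((tendsto_const_nhds (x := Q)).sub hpow)
      (by simpa using hQ)
    rwa [sub_zero, div_self hQ] at h
  obtain ⟨C, hC⟩ := hw.norm.bddAbove_range
  rw [← summable_nat_add_iff 1]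
  refine Summable.of_norm_bounded ((summable_vCoeff hq hQ |r|).mul_left (C * |r|)) fun n => ?_
  have hCn : ‖Q / (Q - q ^ (n + 1))‖ ≤ C := hC ⟨n, rfl⟩
  rw [norm_mul, norm_norm, norm_pow, Real.norm_eq_abs, uCoeff, norm_mul, pow_succ |r|]
  calc ‖Q / (Q - q ^ (n + 1))‖ * ‖vCoeff q Q n‖ * (|r| ^ n * |r|)
      ≤ C * ‖vCoeff q Q n‖ * (|r| ^ n * |r|) := by gcongr
    _ = C * |r| * (‖vCoeff q Q n‖ * |r| ^ n) := by ring

end Convergence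

end QDifferenceSystem

open QDifferenceSystem

theorem statement12_general (q α : ℝ) (hq0 : 0 < q) (hq1 : q < 1)
    (hodd : ∀ j : ℕ, α ≠ 2 * (j : ℝ) + 1) :
    ∃! p : (ℂ → ℂ) × (ℂ → ℂ),
      Differentiable ℂ p.1 ∧ Differentiable ℂ p.2 ∧
      (∀ t : ℂ, p.1 (-t) = -p.1 t) ∧ (∀ t : ℂ, p.2 (-t) = p.2 t) ∧ p.2 0 = 1 ∧
      ∀ t : ℂ,
        p.1 ((q : ℂ) * t) = ((q ^ α : ℝ) : ℂ) * p.1 t - t * ((q ^ α : ℝ) : ℂ) * p.2 t ∧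
        p.2 ((q : ℂ) * t) = t * (q : ℂ) ^ 2 * p.1 t + (1 - t ^ 2 * (q : ℂ) ^ 2) * p.2 t := by
  have hq : ‖(q : ℂ)‖ < 1 := by rwa [Complex.norm_real, Real.norm_of_nonneg hq0.le]
  have hq_pow : ∀ n, n ≠ 0 → (q : ℂ) ^ n ≠ 1 := fun _ => pow_ne_one_of_norm_lt_one hq
  have hQ : ((q ^ α : ℝ) : ℂ) ≠ 0 := by exact_mod_cast (Real.rpow_pos_of_pos hq0 α).ne'
  have hQq : ∀ n, Odd n → ((q ^ α : ℝ) : ℂ) ≠ (q : ℂ) ^ n := by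
    rintro n ⟨j, rfl⟩ h
    have h' : q ^ α = q ^ ((2 * j + 1 : ℕ) : ℝ) := by
      rw [Real.rpow_natCast]
      exact_mod_cast h
    exact hodd j (by simpa using (Real.rpow_right_inj hq0 hq1.ne).1 h')
  have hcoeff := isSeriesSolution_coeff hq_pow hQq
  obtain ⟨U, hUd, hU⟩ := exists_differentiable_hasEntireSeries fun r => summable_uCoeff hq hQ r
  obtain ⟨V, hVd, hV⟩ := exists_differentiable_hasEntireSeries fun r => summable_vCoeff hq hQ r
  refine ⟨(U, V), ⟨hUd, hVd, (isSolution_iff hU hV).2 hcoeff⟩, ?_⟩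
  rintro ⟨u, v⟩ ⟨hud, hvd, hsol⟩
  obtain ⟨a, ha⟩ := hud.exists_hasEntireSeries
  obtain ⟨b, hb⟩ := hvd.exists_hasEntireSeries
  obtain ⟨rfl, rfl⟩ := ((isSolution_iff ha hb).1 hsol).unique hq_pow hQq hcoeff
  exact Prod.ext (funext ((ha.forall_eq_iff hU).2 fun _ => rfl))
    (funext ((hb.forall_eq_iff hV).2 fun _ => rfl))

/-- existence and uniqueness of the entire power-series solution
`S_B = [u, v]^T` of `S_B(qt) = [[q^α, -t q^α],[t q², 1 - t² q²]] S_B(t)`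
with `u` odd, `v` even, `v(0) = 1`. -/
theorem statement12 (q α : ℝ) (hq0 : 0 < q) (hq1 : q < 1) (hα : -1 < α)
    (hodd : ∀ j : ℕ, α ≠ 2 * (j : ℝ) + 1) :
    ∃! p : (ℂ → ℂ) × (ℂ → ℂ),
      Differentiable ℂ p.1 ∧ Differentiable ℂ p.2 ∧
      (∀ t : ℂ, p.1 (-t) = -p.1 t) ∧ (∀ t : ℂ, p.2 (-t) = p.2 t) ∧ p.2 0 = 1 ∧
      ∀ t : ℂ,
        p.1 ((q : ℂ) * t) = ((q ^ α : ℝ) : ℂ) * p.1 t - t * ((q ^ α : ℝ) : ℂ) * p.2 t ∧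
        p.2 ((q : ℂ) * t) = t * (q : ℂ) ^ 2 * p.1 t + (1 - t ^ 2 * (q : ℂ) ^ 2) * p.2 t :=
  statement12_general q α hq0 hq1 hodd
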